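/- Define indices o₀ = 0 and, recursively for v ≥ 1 while o_{v−1} < K+1: let p_v = min over i with o_{v−1} < i ≤ K+1 of ( Σ_{j=o_{v−1}}^{i−1} Eʲ ) / ( tⁱ − t^{o_{v−1}} ), and let o_v be the largest index i attaining this minimum. Define the power sequence P by Pⁱ = p_v for all i with o_{v−1} < i ≤ o_v. Then P is feasible, and P maximizes the throughput Σ_{i=1}^{K+1} lⁱ g(Pⁱ) over all feasible power sequences; that is, the greedy minimal-slope policy is optimal for the single-sequence energy-harvesting problem. -/

import Mathlib

/-!
The tangent-line bound for the concave `g` reduces optimality of `P` against a feasible `Q` to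
`∑ g'(Pⁱ) lⁱ (Qⁱ - Pⁱ) ≤ 0`. Summation by parts rewrites this sum through the cumulative
differences `Dₖ = ∑_{i ≤ k} lⁱ (Qⁱ - Pⁱ)` weighted by `g'(Pᵏ) - g'(Pᵏ⁺¹)`. The greedy powers are
nondecreasing (a later block with a smaller slope would contradict the minimality of the earlier
one), so these weights are nonnegative; they vanish except at block ends, where `P` has spent
exactly the harvested energy, so that there `Dₖ ≤ 0` by feasibility of `Q`.
-/

/-- `g(x) = (1/2) log(1 + K₀ x)` (natural logarithm). -/
noncomputable def gfun (K0 x : ℝ) : ℝ := Real.log (1 + K0 * x) / 2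

/-- Feasibility in the single-sequence energy-harvesting problem. -/
def SFeas (K : ℕ) (t E P : ℕ → ℝ) : Prop :=
  (∀ i, 1 ≤ i → i ≤ K + 1 → 0 ≤ P i) ∧
  (∀ k, 1 ≤ k → k ≤ K + 1 →
    ∑ i ∈ Finset.Icc 1 k, P i * (t i - t (i - 1)) ≤ ∑ j ∈ Finset.range k, E j)

/-- The throughput `Σ_{i=1}^{K+1} lⁱ g(Pⁱ)`. -/
noncomputable def SThroughput (K0 : ℝ) (K : ℕ) (t P : ℕ → ℝ) : ℝ :=
  ∑ i ∈ Finset.Icc 1 (K + 1), (t i - t (i - 1)) * gfun K0 (P i)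

open Finset

lemma gfun_sub_le {K0 a b : ℝ} (ha : 0 < 1 + K0 * a) (hb : 0 < 1 + K0 * b) :
    gfun K0 b - gfun K0 a ≤ K0 / (2 * (1 + K0 * a)) * (b - a) := by
  have hlog := Real.log_le_sub_one_of_pos (div_pos hb ha)
  rw [Real.log_div hb.ne' ha.ne'] at hlog
  have hlin : ((1 + K0 * b) / (1 + K0 * a) - 1) / 2 = K0 / (2 * (1 + K0 * a)) * (b - a) := by
    field_simp
    ring
  unfold gfun
  linarith

lemma sum_Icc_mul_le_of_partial_sums {w x : ℕ → ℝ} {N : ℕ}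
    (h : ∀ k ∈ Ico 1 N, (w k - w (k + 1)) * ∑ i ∈ Icc 1 k, x i ≤ 0) :
    ∑ i ∈ Icc 1 N, w i * x i ≤ w N * ∑ i ∈ Icc 1 N, x i := by
  induction N with
  | zero => simp
  | succ N ih =>
    have hN : (w N - w (N + 1)) * ∑ i ∈ Icc 1 N, x i ≤ 0 := by
      rcases N.eq_zero_or_pos with rfl | hpos
      · simp
      · exact h N (mem_Ico.2 ⟨hpos, N.lt_succ_self⟩)
    have ih' := ih fun k hk => h k (mem_Ico.2 ⟨(mem_Ico.1 hk).1, by grind⟩)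
    rw [sum_Icc_succ_top (by omega), sum_Icc_succ_top (by omega)]
    nlinarith

def consumed (t P : ℕ → ℝ) (k : ℕ) : ℝ := ∑ i ∈ Icc 1 k, P i * (t i - t (i - 1))

lemma consumed_eq_add_of_const {t P : ℕ → ℝ} {a k : ℕ} {c : ℝ} (hak : a ≤ k)
    (hP : ∀ i, a < i → i ≤ k → P i = c) :
    consumed t P k = consumed t P a + c * (t k - t a) := by
  induction k, hak using Nat.le_induction with
  | base => simp
  | succ k hak ih =>
    rw [consumed, sum_Icc_succ_top (by omega), ← consumed, ih fun i hi hik => hP i hi (by omega),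
      hP (k + 1) (by omega) le_rfl, Nat.add_sub_cancel]
    ring

theorem SThroughput_le_of_tight_at_increases {K0 : ℝ} (hK0 : 0 ≤ K0) {K : ℕ} {t E P Q : ℕ → ℝ}
    (ht : ∀ i ≤ K, t i ≤ t (i + 1)) (hP : ∀ i, 1 ≤ i → i ≤ K + 1 → 0 ≤ P i)
    (hstep : ∀ k ∈ Icc 1 K,
      P k = P (k + 1) ∨ P k ≤ P (k + 1) ∧ consumed t P k = ∑ j ∈ range k, E j)
    (hend : consumed t P (K + 1) = ∑ j ∈ range (K + 1), E j) (hQ : SFeas K t E Q) :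
    SThroughput K0 K t Q ≤ SThroughput K0 K t P := by
  set w : ℕ → ℝ := fun i => K0 / (2 * (1 + K0 * P i))
  set x : ℕ → ℝ := fun i => (Q i - P i) * (t i - t (i - 1))
  have hpos : ∀ {R : ℕ → ℝ} {i}, (∀ i, 1 ≤ i → i ≤ K + 1 → 0 ≤ R i) → 1 ≤ i → i ≤ K + 1 →
      0 < 1 + K0 * R i := fun hR hi1 hi2 => by nlinarith [hR _ hi1 hi2]
  have hx : ∀ k, ∑ i ∈ Icc 1 k, x i = consumed t Q k - consumed t P k := fun k => by
    rw [consumed, consumed, ← sum_sub_distrib]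
    exact sum_congr rfl fun i _ => by ring
  have hQc : ∀ k, 1 ≤ k → k ≤ K + 1 → consumed t Q k ≤ ∑ j ∈ range k, E j := hQ.2
  have htangent :
      SThroughput K0 K t Q - SThroughput K0 K t P ≤ ∑ i ∈ Icc 1 (K + 1), w i * x i := by
    rw [SThroughput, SThroughput, ← sum_sub_distrib]
    refine sum_le_sum fun i hi => ?_
    obtain ⟨hi1, hi2⟩ := mem_Icc.1 hi
    have hl : 0 ≤ t i - t (i - 1) := by
      have := ht (i - 1) (by omega)
      rw [Nat.sub_add_cancel hi1] at this
      linarith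
    have := mul_le_mul_of_nonneg_left (gfun_sub_le (hpos hP hi1 hi2) (hpos hQ.1 hi1 hi2)) hl
    simp only [w, x]
    linarith
  have hparts : ∑ i ∈ Icc 1 (K + 1), w i * x i ≤ w (K + 1) * ∑ i ∈ Icc 1 (K + 1), x i := by
    refine sum_Icc_mul_le_of_partial_sums fun k hk => ?_
    obtain ⟨hk1, hkK⟩ := mem_Ico.1 hk
    rcases hstep k (mem_Icc.2 ⟨hk1, by omega⟩) with heq | ⟨hle, htight⟩
    · simp [w, heq]
    · have hw : w (k + 1) ≤ w k :=
        div_le_div_of_nonneg_left hK0 (by nlinarith [hpos hP hk1 (by omega)]) (by nlinarith)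
      have hD : ∑ i ∈ Icc 1 k, x i ≤ 0 := by
        rw [hx, htight]; linarith [hQc k hk1 (by omega)]
      exact mul_nonpos_of_nonneg_of_nonpos (by linarith) hD
  have hlast : w (K + 1) * ∑ i ∈ Icc 1 (K + 1), x i ≤ 0 := by
    refine mul_nonpos_of_nonneg_of_nonpos
      (div_nonneg hK0 (by nlinarith [hpos hP K.succ_pos le_rfl])) ?_
    rw [hx, hend]; linarith [hQc (K + 1) K.succ_pos le_rfl]
  linarith

/-- Block `v + 1` is `(o v, o (v + 1)]`, the paper's `(o_{v-1}, o_v]`. -/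
structure IsSlopeBlocks (K : ℕ) (t E : ℕ → ℝ) (o : ℕ → ℕ) (p P : ℕ → ℝ) : Prop where
  zero : o 0 = 0
  lt_succ : ∀ v, o v < K + 1 → o v < o (v + 1)
  succ_le : ∀ v, o v < K + 1 → o (v + 1) ≤ K + 1
  slope_eq : ∀ v, o v < K + 1 →
    p (v + 1) * (t (o (v + 1)) - t (o v)) = ∑ j ∈ Ico (o v) (o (v + 1)), E j
  slope_le : ∀ v, o v < K + 1 → ∀ i, o v < i → i ≤ K + 1 →
    p (v + 1) * (t i - t (o v)) ≤ ∑ j ∈ Ico (o v) i, E j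
  const : ∀ v, o v < K + 1 → ∀ i, o v < i → i ≤ o (v + 1) → P i = p (v + 1)

namespace IsSlopeBlocks

variable {K : ℕ} {t E : ℕ → ℝ} {o : ℕ → ℕ} {p P : ℕ → ℝ}

theorem exists_block (h : IsSlopeBlocks K t E o p P) {i : ℕ} (hi1 : 1 ≤ i) (hi : i ≤ K + 1) :
    ∃ v, (∀ u ≤ v, o u < i) ∧ i ≤ o (v + 1) := by
  have hreach : ∃ n, i ≤ o n := by
    by_contra! hlt
    have hgrow : ∀ n, n ≤ o n := fun n => by
      induction n with
      | zero => exact Nat.zero_le _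
      | succ n ih => have := h.lt_succ n (by linarith [hlt n]); omega
    linarith [hlt i, hgrow i]
  have hpos : 0 < Nat.find hreach := by
    by_contra! h0
    have := Nat.find_spec hreach
    rw [Nat.le_zero.1 h0, h.zero] at this
    omega
  refine ⟨Nat.find hreach - 1, fun u hu => ?_, ?_⟩
  · by_contra! hiu
    exact Nat.find_min hreach (by omega) hiu
  · rw [Nat.sub_add_cancel hpos]
    exact Nat.find_spec hreach

theorem consumed_eq_sum_range (h : IsSlopeBlocks K t E o p P) :
    ∀ v, (∀ u < v, o u < K + 1) → consumed t P (o v) = ∑ j ∈ range (o v), E j := by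
  intro v
  induction v with
  | zero => simp [consumed, h.zero]
  | succ v ih =>
    intro hact
    have hv := hact v v.lt_succ_self
    have hlt := h.lt_succ v hv
    rw [consumed_eq_add_of_const hlt.le (h.const v hv), ih fun u hu => hact u (by omega),
      h.slope_eq v hv, sum_range_add_sum_Ico _ hlt.le]

theorem p_nonneg (h : IsSlopeBlocks K t E o p P) (ht : StrictMonoOn t (Set.Iic (K + 1)))
    (hE : ∀ j ≤ K, 0 ≤ E j) {v : ℕ} (hv : o v < K + 1) : 0 ≤ p (v + 1) := by
  have hlen : 0 < t (o (v + 1)) - t (o v) :=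
    sub_pos.2 (ht (Set.mem_Iic.2 hv.le) (Set.mem_Iic.2 (h.succ_le v hv)) (h.lt_succ v hv))
  have henergy : 0 ≤ ∑ j ∈ Ico (o v) (o (v + 1)), E j :=
    sum_nonneg fun j hj => hE j (by have := h.succ_le v hv; rw [mem_Ico] at hj; omega)
  exact nonneg_of_mul_nonneg_left (h.slope_eq v hv ▸ henergy) hlen

theorem p_le_p_succ (h : IsSlopeBlocks K t E o p P) (ht : StrictMonoOn t (Set.Iic (K + 1)))
    {v : ℕ} (hv : o v < K + 1) (hv' : o (v + 1) < K + 1) : p (v + 1) ≤ p (v + 2) := by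
  have hc := h.succ_le (v + 1) hv'
  have hlen : 0 < t (o (v + 2)) - t (o (v + 1)) :=
    sub_pos.2 (ht (Set.mem_Iic.2 hv'.le) (Set.mem_Iic.2 hc) (h.lt_succ (v + 1) hv'))
  have hsplit := sum_Ico_consecutive E (h.lt_succ v hv).le (h.lt_succ (v + 1) hv').le
  have hcur := h.slope_eq v hv
  have hnext := h.slope_eq (v + 1) hv'
  have hmin := h.slope_le v hv (o (v + 2)) ((h.lt_succ v hv).trans (h.lt_succ (v + 1) hv')) hc
  refine le_of_mul_le_mul_right ?_ hlen
  linarith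

theorem sFeas (h : IsSlopeBlocks K t E o p P) (ht : StrictMonoOn t (Set.Iic (K + 1)))
    (hE : ∀ j ≤ K, 0 ≤ E j) : SFeas K t E P := by
  refine ⟨fun i hi1 hi => ?_, fun k hk1 hk => ?_⟩
  · obtain ⟨v, hact, hiv⟩ := h.exists_block hi1 hi
    have hv : o v < K + 1 := by linarith [hact v le_rfl]
    rw [h.const v hv i (hact v le_rfl) hiv]
    exact h.p_nonneg ht hE hv
  · obtain ⟨v, hact, hkv⟩ := h.exists_block hk1 hk
    have hv : o v < K + 1 := by linarith [hact v le_rfl]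
    have hblock := consumed_eq_add_of_const (t := t) (hact v le_rfl).le
      fun i hi hik => h.const v hv i hi (hik.trans hkv)
    rw [h.consumed_eq_sum_range v fun u hu => by linarith [hact u hu.le]] at hblock
    have hmin := h.slope_le v hv k (hact v le_rfl) hk
    have hsplit := sum_range_add_sum_Ico E (hact v le_rfl).le
    change consumed t P k ≤ _
    linarith

theorem eq_succ_or_le_succ_and_tight (h : IsSlopeBlocks K t E o p P)
    (ht : StrictMonoOn t (Set.Iic (K + 1))) :
    ∀ k ∈ Icc 1 K, P k = P (k + 1) ∨ P k ≤ P (k + 1) ∧ consumed t P k = ∑ j ∈ range k, E j := by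
  intro k hk
  obtain ⟨hk1, hkK⟩ := mem_Icc.1 hk
  obtain ⟨v, hact, hkv⟩ := h.exists_block hk1 (by omega)
  have hv : o v < K + 1 := by linarith [hact v le_rfl]
  have hPk := h.const v hv k (hact v le_rfl) hkv
  rcases hkv.lt_or_eq with hkv | rfl
  · exact Or.inl (by rw [hPk, h.const v hv (k + 1) (by linarith [hact v le_rfl]) hkv])
  · have hv' : o (v + 1) < K + 1 := by omega
    rw [hPk, h.const (v + 1) hv' _ (by omega) (h.lt_succ (v + 1) hv')]
    exact Or.inr ⟨h.p_le_p_succ ht hv hv',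
      h.consumed_eq_sum_range (v + 1) fun u hu => by linarith [hact u (by omega)]⟩

theorem consumed_last_eq_sum_range (h : IsSlopeBlocks K t E o p P) :
    consumed t P (K + 1) = ∑ j ∈ range (K + 1), E j := by
  obtain ⟨v, hact, hKv⟩ := h.exists_block K.succ_pos le_rfl
  have hend : o (v + 1) = K + 1 := le_antisymm (h.succ_le v (hact v le_rfl)) hKv
  rw [← hend]
  exact h.consumed_eq_sum_range (v + 1) fun u hu => hact u (by omega)

end IsSlopeBlocks

theorem isSlopeBlocks_of_greedy {K : ℕ} {t E : ℕ → ℝ} {o : ℕ → ℕ} {p P : ℕ → ℝ}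
    (ht : StrictMonoOn t (Set.Iic (K + 1))) (ho0 : o 0 = 0)
    (hp : ∀ v, 1 ≤ v → ∀ h : o (v - 1) < K + 1,
      p v = (Finset.Ioc (o (v - 1)) (K + 1)).inf' (Finset.nonempty_Ioc.mpr h)
        (fun i => (∑ j ∈ Finset.Ico (o (v - 1)) i, E j) / (t i - t (o (v - 1)))))
    (ho : ∀ v, 1 ≤ v → o (v - 1) < K + 1 →
      (o (v - 1) < o v ∧ o v ≤ K + 1) ∧
      (∑ j ∈ Finset.Ico (o (v - 1)) (o v), E j) / (t (o v) - t (o (v - 1))) = p v)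
    (hP : ∀ v, 1 ≤ v → o (v - 1) < K + 1 →
      ∀ i, o (v - 1) < i → i ≤ o v → P i = p v) :
    IsSlopeBlocks K t E o p P := by
  have hlen : ∀ {a i}, a < i → i ≤ K + 1 → 0 < t i - t a := fun hai hi =>
    sub_pos.2 (ht (Set.mem_Iic.2 (by omega)) (Set.mem_Iic.2 hi) hai)
  have hbreak : ∀ v, o v < K + 1 → (o v < o (v + 1) ∧ o (v + 1) ≤ K + 1) ∧
      (∑ j ∈ Ico (o v) (o (v + 1)), E j) / (t (o (v + 1)) - t (o v)) = p (v + 1) :=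
    fun v hv => ho (v + 1) v.succ_pos hv
  refine ⟨ho0, fun v hv => (hbreak v hv).1.1, fun v hv => (hbreak v hv).1.2, fun v hv => ?_,
    fun v hv i hvi hi => ?_, fun v hv => hP (v + 1) v.succ_pos hv⟩
  · obtain ⟨⟨hlt, hle⟩, hslope⟩ := hbreak v hv
    rw [← hslope, div_mul_cancel₀ _ (hlen hlt hle).ne']
  · rw [← le_div_iff₀ (hlen hvi hi), hp (v + 1) v.succ_pos hv]
    exact inf'_le _ (mem_Ioc.2 ⟨hvi, hi⟩)

theorem greedy_minimal_slope_optimal_general (K0 : ℝ) (hK0 : 0 < K0)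
    (K : ℕ) (t : ℕ → ℝ) (htmono : ∀ i, i ≤ K → t i < t (i + 1))
    (E : ℕ → ℝ) (hE0 : 0 < E 0) (hE : ∀ j, 1 ≤ j → j ≤ K → 0 ≤ E j)
    (o : ℕ → ℕ) (p : ℕ → ℝ) (P : ℕ → ℝ)
    (ho0 : o 0 = 0)
    (hp : ∀ v, 1 ≤ v → ∀ h : o (v - 1) < K + 1,
      p v = (Finset.Ioc (o (v - 1)) (K + 1)).inf' (Finset.nonempty_Ioc.mpr h)
        (fun i => (∑ j ∈ Finset.Ico (o (v - 1)) i, E j) / (t i - t (o (v - 1)))))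
    (ho : ∀ v, 1 ≤ v → o (v - 1) < K + 1 →
      (o (v - 1) < o v ∧ o v ≤ K + 1) ∧
      (∑ j ∈ Finset.Ico (o (v - 1)) (o v), E j) / (t (o v) - t (o (v - 1))) = p v ∧
      (∀ i, o (v - 1) < i → i ≤ K + 1 →
        (∑ j ∈ Finset.Ico (o (v - 1)) i, E j) / (t i - t (o (v - 1))) = p v →
        i ≤ o v))
    (hP : ∀ v, 1 ≤ v → o (v - 1) < K + 1 →
      ∀ i, o (v - 1) < i → i ≤ o v → P i = p v) :
    SFeas K t E P ∧
    ∀ Q : ℕ → ℝ, SFeas K t E Q → SThroughput K0 K t Q ≤ SThroughput K0 K t P := by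
  have ht : StrictMonoOn t (Set.Iic (K + 1)) :=
    strictMonoOn_Iic_of_lt_succ fun i hi => htmono i (Nat.lt_succ_iff.1 hi)
  have hEnn : ∀ j ≤ K, 0 ≤ E j := fun j hj =>
    j.eq_zero_or_pos.elim (fun h0 => h0 ▸ hE0.le) fun hj1 => hE j hj1 hj
  have hblocks : IsSlopeBlocks K t E o p P := isSlopeBlocks_of_greedy ht ho0 hp
    (fun v hv hact => ⟨(ho v hv hact).1, (ho v hv hact).2.1⟩) hP
  have hfeas := hblocks.sFeas ht hEnn
  exact ⟨hfeas, fun Q hQ => SThroughput_le_of_tight_at_increases hK0.le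
    (fun i hi => (htmono i hi).le) hfeas.1 (hblocks.eq_succ_or_le_succ_and_tight ht)
    hblocks.consumed_last_eq_sum_range hQ⟩

/-- Optimality of the greedy minimal-slope policy (equations (39)–(40) of the
paper): with `o₀ = 0` and, recursively while `o_{v-1} < K+1`,
`p_v = min_{o_{v-1} < i ≤ K+1} (Σ_{j=o_{v-1}}^{i-1} Eʲ)/(tⁱ − t^{o_{v-1}})`,
`o_v` the largest index attaining this minimum, and `Pⁱ = p_v` for
`o_{v-1} < i ≤ o_v`, the resulting power sequence `P` is feasible and
maximizes the throughput over all feasible power sequences. -/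
theorem greedy_minimal_slope_optimal (K0 : ℝ) (hK0 : 0 < K0)
    (K : ℕ) (t : ℕ → ℝ) (ht0 : t 0 = 0) (htmono : ∀ i, i ≤ K → t i < t (i + 1))
    (E : ℕ → ℝ) (hE0 : 0 < E 0) (hE : ∀ j, 1 ≤ j → j ≤ K → 0 ≤ E j)
    (o : ℕ → ℕ) (p : ℕ → ℝ) (P : ℕ → ℝ)
    (ho0 : o 0 = 0)
    (hp : ∀ v, 1 ≤ v → ∀ h : o (v - 1) < K + 1,
      p v = (Finset.Ioc (o (v - 1)) (K + 1)).inf' (Finset.nonempty_Ioc.mpr h)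
        (fun i => (∑ j ∈ Finset.Ico (o (v - 1)) i, E j) / (t i - t (o (v - 1)))))
    (ho : ∀ v, 1 ≤ v → o (v - 1) < K + 1 →
      (o (v - 1) < o v ∧ o v ≤ K + 1) ∧
      (∑ j ∈ Finset.Ico (o (v - 1)) (o v), E j) / (t (o v) - t (o (v - 1))) = p v ∧
      (∀ i, o (v - 1) < i → i ≤ K + 1 →
        (∑ j ∈ Finset.Ico (o (v - 1)) i, E j) / (t i - t (o (v - 1))) = p v →
        i ≤ o v))
    (hP : ∀ v, 1 ≤ v → o (v - 1) < K + 1 →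
      ∀ i, o (v - 1) < i → i ≤ o v → P i = p v) :
    SFeas K t E P ∧
    ∀ Q : ℕ → ℝ, SFeas K t E Q → SThroughput K0 K t Q ≤ SThroughput K0 K t P :=
  greedy_minimal_slope_optimal_general K0 hK0 K t htmono E hE0 hE o p P ho0 hp ho hP
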